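/- Let v : ℝⁿ₊ → ℝᵐ be continuous on the closed upper half-space, let a > 0 and ν ∈ ℝ, and define h(x) = sup{ t ≥ 0 : sup over the shifted cone Γ_a(x,t) of |v| > ν }, where Γ_a(x,t) = (0,t) + Γ_a(x,0) and Γ_a(x,0) = { X ∈ ℝⁿ₊ : |X − (x,0)| ≤ (1+a)·dist(X, ∂ℝⁿ₊) }. If h(x) < ∞ for all x ∈ ℝⁿ⁻¹, then h is Lipschitz continuous with Lipschitz constant at most 1/a. -/

import Mathlib

/-!
A point lies in the shifted cone `Γ_a(x,t)` iff its displacement from the vertex `(x,t)` lies in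
the convex cone `{(u, w) : ‖(u, w)‖₂ ≤ (1 + a) w}`, which is closed under addition. The vector
`(x - y, ‖x - y‖ / a)` lies in that cone, so `Γ_a(x,t) ⊆ Γ_a(y, t - ‖x - y‖ / a)`: every height
admissible at `x` gives an admissible height at `y` lower by at most `‖x - y‖ / a`.
Hence `h x ≤ h y + ‖x - y‖ / a`, and symmetrically.
-/

open WithLp

section ConeStoppingTime

variable {E : Type*} [SeminormedAddCommGroup E]

def InVerticalCone (a : ℝ) (q : E × ℝ) : Prop :=
  √(‖q.1‖ ^ 2 + q.2 ^ 2) ≤ (1 + a) * q.2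

/-- The heights `t ≥ 0` such that `P` holds somewhere in the shifted cone `Γ_a(x,t)`. -/
def coneStoppingHeights (a : ℝ) (P : E × ℝ → Prop) (x : E) : Set ℝ :=
  {t | 0 ≤ t ∧ ∃ p : E × ℝ, t < p.2 ∧
    √(‖p.1 - x‖ ^ 2 + (p.2 - t) ^ 2) ≤ (1 + a) * (p.2 - t) ∧ P p}

lemma inVerticalCone_iff_norm_toLp_le {a : ℝ} {q : E × ℝ} :
    InVerticalCone a q ↔ ‖toLp 2 q‖ ≤ (1 + a) * q.2 := by
  rw [InVerticalCone, prod_norm_eq_of_L2]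
  simp only [toLp_fst, toLp_snd, Real.norm_eq_abs, sq_abs]

lemma InVerticalCone.add {a : ℝ} {q q' : E × ℝ} (hq : InVerticalCone a q)
    (hq' : InVerticalCone a q') : InVerticalCone a (q + q') := by
  rw [inVerticalCone_iff_norm_toLp_le] at *
  calc ‖toLp 2 (q + q')‖ ≤ ‖toLp 2 q‖ + ‖toLp 2 q'‖ := by
        rw [toLp_add]; exact norm_add_le _ _
    _ ≤ (1 + a) * q.2 + (1 + a) * q'.2 := add_le_add hq hq'
    _ = (1 + a) * (q + q').2 := by rw [Prod.snd_add, mul_add]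

lemma inVerticalCone_norm_div {a : ℝ} (ha : 0 < a) (u : E) :
    InVerticalCone a (u, ‖u‖ / a) := by
  have hc : 0 ≤ ‖u‖ / a := by positivity
  have hapex : (1 + a) * (‖u‖ / a) = ‖u‖ / a + ‖u‖ := by
    rw [add_mul, one_mul, mul_div_cancel₀ _ ha.ne']
  show √(‖u‖ ^ 2 + (‖u‖ / a) ^ 2) ≤ (1 + a) * (‖u‖ / a)
  rw [hapex, Real.sqrt_le_iff]
  exact ⟨by positivity, by nlinarith [mul_nonneg hc (norm_nonneg u)]⟩

lemma sub_mem_coneStoppingHeights {a : ℝ} (ha : 0 < a) {P : E × ℝ → Prop} {x y : E} {t : ℝ}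
    (ht : t ∈ coneStoppingHeights a P x) (hlt : ‖x - y‖ / a < t) :
    t - ‖x - y‖ / a ∈ coneStoppingHeights a P y := by
  obtain ⟨-, p, hpt, hcone, hP⟩ := ht
  have hc : 0 ≤ ‖x - y‖ / a := by positivity
  have hshift : InVerticalCone a ((p.1 - x, p.2 - t) + (x - y, ‖x - y‖ / a)) :=
    InVerticalCone.add hcone (inVerticalCone_norm_div ha _)
  rw [Prod.mk_add_mk, sub_add_sub_cancel, sub_add] at hshift
  exact ⟨by linarith, p, by linarith, hshift, hP⟩

lemma sSup_le_sSup_add_of_forall_sub_mem {A B : Set ℝ} {c : ℝ} (hc : 0 ≤ c) (hB : BddAbove B)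
    (hB₀ : ∀ s ∈ B, 0 ≤ s) (hAB : ∀ t ∈ A, c < t → t - c ∈ B) : sSup A ≤ sSup B + c := by
  have hsup₀ : 0 ≤ sSup B := Real.sSup_nonneg hB₀
  refine Real.sSup_le (fun t ht => ?_) (by positivity)
  rcases le_or_gt t c with htc | htc
  · linarith
  · linarith [le_csSup hB (hAB t ht htc)]

lemma sSup_coneStoppingHeights_le {a : ℝ} (ha : 0 < a) {P : E × ℝ → Prop}
    (hbdd : ∀ x, BddAbove (coneStoppingHeights a P x)) (x y : E) :
    sSup (coneStoppingHeights a P x) ≤ sSup (coneStoppingHeights a P y) + 1 / a * ‖x - y‖ := by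
  rw [one_div_mul_eq_div]
  exact sSup_le_sSup_add_of_forall_sub_mem (by positivity) (hbdd y) (fun _ hs => hs.1)
    (fun _ ht hlt => sub_mem_coneStoppingHeights ha ht hlt)

end ConeStoppingTime

theorem stmt_2_general (d m : ℕ) (a ν : ℝ) (ha : 0 < a)
    (v : EuclideanSpace ℝ (Fin d) × ℝ → EuclideanSpace ℝ (Fin m))
    (h : EuclideanSpace ℝ (Fin d) → ℝ)
    (hdef : ∀ x, h x = sSup {t : ℝ | 0 ≤ t ∧
      ∃ p : EuclideanSpace ℝ (Fin d) × ℝ, t < p.2 ∧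
        Real.sqrt (‖p.1 - x‖ ^ 2 + (p.2 - t) ^ 2) ≤ (1 + a) * (p.2 - t) ∧
        ν < ‖v p‖})
    (hfin : ∀ x, BddAbove {t : ℝ | 0 ≤ t ∧
      ∃ p : EuclideanSpace ℝ (Fin d) × ℝ, t < p.2 ∧
        Real.sqrt (‖p.1 - x‖ ^ 2 + (p.2 - t) ^ 2) ≤ (1 + a) * (p.2 - t) ∧
        ν < ‖v p‖}) :
    ∀ x y, |h x - h y| ≤ (1 / a) * ‖x - y‖ := by
  have hdef' : ∀ x, h x = sSup (coneStoppingHeights a (fun p => ν < ‖v p‖) x) := hdef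
  have hle := sSup_coneStoppingHeights_le ha (P := fun p => ν < ‖v p‖) hfin
  intro x y
  rw [abs_sub_le_iff, hdef' x, hdef' y]
  constructor
  · linarith [hle x y]
  · linarith [norm_sub_rev x y ▸ hle y x]

/-- Lemma 4.5 (Lemma 3.13 of KKPT): the stopping-time function
`h(x) = sup{ t ≥ 0 : sup_{Γ_a(x,t)} |v| > ν }`, where `Γ_a(x,t)` is the
non-tangential cone of aperture `a` with vertex `(x,0)` shifted vertically by `t`,
is Lipschitz with constant `1/a`, provided it is finite everywhere. -/
theorem stmt_2 (d m : ℕ) (a ν : ℝ) (ha : 0 < a)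
    (v : EuclideanSpace ℝ (Fin d) × ℝ → EuclideanSpace ℝ (Fin m))
    (hv : ContinuousOn v {p : EuclideanSpace ℝ (Fin d) × ℝ | 0 ≤ p.2})
    (h : EuclideanSpace ℝ (Fin d) → ℝ)
    (hdef : ∀ x, h x = sSup {t : ℝ | 0 ≤ t ∧
      ∃ p : EuclideanSpace ℝ (Fin d) × ℝ, t < p.2 ∧
        Real.sqrt (‖p.1 - x‖ ^ 2 + (p.2 - t) ^ 2) ≤ (1 + a) * (p.2 - t) ∧
        ν < ‖v p‖})
    (hfin : ∀ x, BddAbove {t : ℝ | 0 ≤ t ∧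
      ∃ p : EuclideanSpace ℝ (Fin d) × ℝ, t < p.2 ∧
        Real.sqrt (‖p.1 - x‖ ^ 2 + (p.2 - t) ^ 2) ≤ (1 + a) * (p.2 - t) ∧
        ν < ‖v p‖}) :
    ∀ x y, |h x - h y| ≤ (1 / a) * ‖x - y‖ :=
  stmt_2_general d m a ν ha v h hdef hfin
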